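/- arXiv:0912.0338 — 5 statements merged into one kernel-verified Lean document; each statement's English description precedes it below -/
import Mathlib

section
/- Let ρ > 25 and ε = 1/ρ. Define the Δ×Δ matrix M by M_{j,j} = 1/2, M_{j,k} = 1 for j > k, and M_{j,k} = ε^{k−j} for k > j. Then the vector x with x_k = ε^{k/2} is strictly positive and satisfies (Mᵀ x)_j ≤ (1/2 + 2√ε/(1−√ε)) x_j for all j, where 1/2 + 2√ε/(1−√ε) < 1. -/
/-!
Write `s = √ε`, so that `x_k = s^(k+1)` and `ε^(j-k) = s^(2(j-k))`. Every off-diagonal term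
`M_{k,j} x_k` of `(Mᵀx)_j` then equals `s^(j+1) s^|k-j|`, and the distances `|k-j|` on either
side of `j` are distinct positive integers, so each side contributes at most
`s^(j+1) · s/(1-s)`. Finally `ρ > 25` gives `s < 1/5`, hence `2s/(1-s) < 1/2`.
-/

open Matrix Finset

lemma sum_pow_le_div_one_sub_of_injOn {s : ℝ} (hs0 : 0 ≤ s) (hs1 : s < 1)
    {ι : Type*} {S : Finset ι} {g : ι → ℕ}
    (hg : Set.InjOn g S) (hg1 : ∀ i ∈ S, 1 ≤ g i) :
    ∑ i ∈ S, s ^ g i ≤ s / (1 - s) := by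
  rw [← sum_image hg]
  calc ∑ m ∈ S.image g, s ^ m
      ≤ ∑ m ∈ Ico 1 ((S.image g).sup id + 1), s ^ m := by
        refine sum_le_sum_of_subset_of_nonneg (fun m hm => ?_) fun _ _ _ => pow_nonneg hs0 _
        obtain ⟨i, hi, rfl⟩ := mem_image.1 hm
        exact mem_Ico.2 ⟨hg1 i hi, Nat.lt_succ_of_le (le_sup (f := id) hm)⟩
    _ ≤ s ^ 1 / (1 - s) := geom_sum_Ico_le_of_lt_one hs0 hs1
    _ = s / (1 - s) := by rw [pow_one]

lemma sum_erase_pow_dist_le {s : ℝ} (hs0 : 0 ≤ s) (hs1 : s < 1) {n : ℕ} (j : Fin n) :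
    ∑ k ∈ univ.erase j, s ^ Nat.dist k j ≤ 2 * s / (1 - s) := by
  rw [← sum_filter_add_sum_filter_not _ (· < j), two_mul, add_div]
  refine add_le_add (sum_pow_le_div_one_sub_of_injOn hs0 hs1 ?_ ?_)
    (sum_pow_le_div_one_sub_of_injOn hs0 hs1 ?_ ?_) <;>
  · simp only [Set.InjOn, coe_filter, mem_filter, mem_erase, mem_univ, Set.mem_ofPred_eq,
      ne_eq, and_true, Fin.ext_iff, Fin.lt_def, Nat.dist]
    omega

lemma mixture_entry_mul_pow (s : ℝ) {n : ℕ} (j k : Fin n) :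
    (if k = j then 1 / 2 else if j < k then 1 else (s ^ 2) ^ (j.val - k.val)) * s ^ (k.val + 1)
      = if k = j then 1 / 2 * s ^ (j.val + 1) else s ^ (j.val + 1) * s ^ Nat.dist k j := by
  rw [← pow_add]
  split_ifs with hkj hjk
  · rw [hkj]
  · rw [one_mul]
    congr 1
    simp only [Fin.lt_def, Nat.dist] at hjk ⊢
    omega
  · rw [← pow_mul, ← pow_add]
    congr 1
    simp only [Fin.lt_def, Fin.ext_iff, Nat.dist] at hkj hjk ⊢
    omega

/-- For `ρ > 25`, `ε = 1/ρ`, the matrix `M` with `M_{j,j} = 1/2`, `M_{j,k} = 1`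
for `j > k`, `M_{j,k} = ε^{k−j}` for `k > j` satisfies `Mᵀ x ≤ θ x` for the
strictly positive vector `x_k = ε^{k/2}`, with `θ = 1/2 + 2√ε/(1−√ε) < 1`. -/
theorem mixture_matrix_subinvariant (Δ : ℕ) (ρ ε : ℝ) (hρ : 25 < ρ) (hε : ε = 1 / ρ)
    (M : Matrix (Fin Δ) (Fin Δ) ℝ)
    (hM : ∀ j k : Fin Δ, M j k =
      if j = k then 1/2 else if k < j then 1 else ε ^ (k.val - j.val))
    (x : Fin Δ → ℝ) (hx : ∀ k : Fin Δ, x k = Real.sqrt ε ^ (k.val + 1)) :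
    (∀ k, 0 < x k) ∧
    (∀ j, Mᵀ.mulVec x j ≤ (1/2 + 2 * Real.sqrt ε / (1 - Real.sqrt ε)) * x j) ∧
    1/2 + 2 * Real.sqrt ε / (1 - Real.sqrt ε) < 1 := by
  have hε0 : 0 < ε := by rw [hε]; positivity
  set s := Real.sqrt ε
  have hs0 : 0 < s := Real.sqrt_pos.2 hε0
  have hs : s < 1 / 5 := (Real.sqrt_lt' (by norm_num)).2 <| by
    rw [hε, div_lt_iff₀ (by linarith)]; linarith
  have hεs : ε = s ^ 2 := (Real.sq_sqrt hε0.le).symm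
  refine ⟨fun k => hx k ▸ pow_pos hs0 _, fun j => ?_, ?_⟩
  · have hentry (k : Fin Δ) : M k j * x k =
        if k = j then 1 / 2 * s ^ (j.val + 1) else s ^ (j.val + 1) * s ^ Nat.dist k j := by
      rw [hM, hx, hεs, ← mixture_entry_mul_pow]
    calc (Mᵀ *ᵥ x) j = ∑ k, M k j * x k := by simp only [mulVec, dotProduct, transpose_apply]
      _ = 1 / 2 * s ^ (j.val + 1) + s ^ (j.val + 1) * ∑ k ∈ univ.erase j, s ^ Nat.dist k j := by
        rw [← add_sum_erase _ _ (mem_univ j), mul_sum, hentry, if_pos rfl]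
        exact congrArg _ (sum_congr rfl fun k hk => by rw [hentry, if_neg (ne_of_mem_erase hk)])
      _ ≤ 1 / 2 * s ^ (j.val + 1) + s ^ (j.val + 1) * (2 * s / (1 - s)) := by
        gcongr; exact sum_erase_pow_dist_le hs0.le (by linarith) j
      _ = (1 / 2 + 2 * s / (1 - s)) * x j := by rw [hx]; ring
  · have : 2 * s / (1 - s) < 1 / 2 := by rw [div_lt_iff₀ (by linarith)]; linarith
    linarith
end

section
/- For Δ ≥ 2 and all sufficiently large n, for every graph G with n vertices and maximum degree at most Δ with i.i.d. Exp(1) node weights: 1 ≤ E[W(I*)]/|I^M| ≤ 10·log Δ, where I* is the maximum weight independent set and I^M a maximum cardinality independent set. -/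
/-!
Lower bound: `I*` is at least as heavy as the fixed set `I^M` for every realisation of the
weights, and each weight has mean `1`.

Upper bound: for `t ≥ 0` every independent set `J` satisfies
`W(J) ≤ |J| t + ∑ᵥ (Wᵥ - t)⁺ ≤ |I^M| t + ∑ᵥ (Wᵥ - t)⁺`, and `E (Wᵥ - t)⁺ = e^{-t}` for `Exp(1)`
weights. With `t = log (Δ + 1)` this gives `E W(I*) ≤ |I^M| log (Δ + 1) + n / (Δ + 1)`, and
`n ≤ |I^M| (Δ + 1)` because a maximum independent set and its neighbours cover every vertex.
-/

open MeasureTheory ProbabilityTheory Finset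

namespace ProbabilityTheory

open Real Set Filter Topology

variable {r t : ℝ}

lemma exponentialPDFReal_of_nonneg {x : ℝ} (hx : 0 ≤ x) :
    exponentialPDFReal r x = r * exp (-(r * x)) := by
  simp [exponentialPDFReal, gammaPDFReal, hx]

lemma exponentialPDFReal_of_neg {x : ℝ} (hx : x < 0) : exponentialPDFReal r x = 0 := by
  simp [exponentialPDFReal, gammaPDFReal, hx.not_ge]

lemma expMeasure_eq_withDensity :
    expMeasure r = volume.withDensity fun x => ENNReal.ofReal (exponentialPDFReal r x) := rfl

lemma integrable_expMeasure_iff (hr : 0 < r) {g : ℝ → ℝ} :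
    Integrable g (expMeasure r) ↔ Integrable (fun x => exponentialPDFReal r x * g x) := by
  rw [expMeasure_eq_withDensity, integrable_withDensity_iff_integrable_smul'
    (measurable_exponentialPDFReal r).ennreal_ofReal (ae_of_all _ fun _ => ENNReal.ofReal_lt_top)]
  simp [ENNReal.toReal_ofReal (exponentialPDFReal_nonneg hr _)]

lemma integral_expMeasure (hr : 0 < r) (g : ℝ → ℝ) :
    ∫ x, g x ∂expMeasure r = ∫ x, exponentialPDFReal r x * g x := by
  rw [expMeasure_eq_withDensity, integral_withDensity_eq_integral_toReal_smul
    (measurable_exponentialPDFReal r).ennreal_ofReal (ae_of_all _ fun _ => ENNReal.ofReal_lt_top)]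
  simp [ENNReal.toReal_ofReal (exponentialPDFReal_nonneg hr _)]

lemma exponentialPDFReal_mul_max_sub (ht : 0 ≤ t) (x : ℝ) :
    exponentialPDFReal r x * max (x - t) 0 =
      (Ioi t).indicator (fun x => r * (x - t) * exp (-(r * x))) x := by
  by_cases hx : t < x
  · rw [indicator_of_mem (show x ∈ Ioi t from hx), exponentialPDFReal_of_nonneg (ht.trans hx.le),
      max_eq_left (sub_nonneg.2 hx.le)]
    ring
  · rw [indicator_of_notMem (show x ∉ Ioi t from hx), max_eq_right (by linarith [not_lt.1 hx]),
      mul_zero]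

lemma exponentialPDFReal_mul_eq_mul_max_sub_zero (x : ℝ) :
    exponentialPDFReal r x * x = exponentialPDFReal r x * max (x - 0) 0 := by
  rcases lt_or_ge x 0 with hx | hx
  · simp [exponentialPDFReal_of_neg hx]
  · rw [sub_zero, max_eq_left hx]

lemma hasDerivAt_neg_sub_add_inv_mul_exp (hr : r ≠ 0) (x : ℝ) :
    HasDerivAt (fun x => -(x - t + r⁻¹) * exp (-(r * x))) (r * (x - t) * exp (-(r * x))) x := by
  have h₁ : HasDerivAt (fun x => -(x - t + r⁻¹)) (-1) x :=
    (((hasDerivAt_id' x).sub_const t).add_const r⁻¹).neg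
  have h₂ : HasDerivAt (fun x => exp (-(r * x))) (exp (-(r * x)) * -(r * 1)) x :=
    ((hasDerivAt_id' x).const_mul r).neg.exp
  refine (h₁.mul h₂).congr_deriv ?_
  field_simp
  ring

lemma tendsto_neg_sub_add_inv_mul_exp_atTop (hr : 0 < r) :
    Tendsto (fun x => -(x - t + r⁻¹) * exp (-(r * x))) atTop (𝓝 0) := by
  have h₁ := tendsto_rpow_mul_exp_neg_mul_atTop_nhds_zero 1 r hr
  have h₀ := tendsto_rpow_mul_exp_neg_mul_atTop_nhds_zero 0 r hr
  convert h₁.neg.add (h₀.const_mul (t - r⁻¹)) using 2 with x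
  · simp only [rpow_one, rpow_zero, neg_mul]
    ring
  · simp

lemma mul_sub_mul_exp_nonneg (hr : 0 < r) {x : ℝ} (hx : x ∈ Ioi t) :
    0 ≤ r * (x - t) * exp (-(r * x)) :=
  mul_nonneg (mul_nonneg hr.le (sub_nonneg.2 (le_of_lt hx))) (exp_pos _).le

lemma integrable_max_sub_expMeasure (hr : 0 < r) (ht : 0 ≤ t) :
    Integrable (fun x => max (x - t) 0) (expMeasure r) := by
  rw [integrable_expMeasure_iff hr, funext (exponentialPDFReal_mul_max_sub ht),
    integrable_indicator_iff measurableSet_Ioi]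
  exact integrableOn_Ioi_deriv_of_nonneg' (fun x _ => hasDerivAt_neg_sub_add_inv_mul_exp hr.ne' x)
    (fun _ hx => mul_sub_mul_exp_nonneg hr hx) (tendsto_neg_sub_add_inv_mul_exp_atTop hr)

lemma integral_max_sub_expMeasure (hr : 0 < r) (ht : 0 ≤ t) :
    ∫ x, max (x - t) 0 ∂expMeasure r = exp (-(r * t)) / r := by
  rw [integral_expMeasure hr, funext (exponentialPDFReal_mul_max_sub ht),
    integral_indicator measurableSet_Ioi,
    integral_Ioi_of_hasDerivAt_of_nonneg' (fun x _ => hasDerivAt_neg_sub_add_inv_mul_exp hr.ne' x)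
      (fun _ hx => mul_sub_mul_exp_nonneg hr hx) (tendsto_neg_sub_add_inv_mul_exp_atTop hr)]
  field_simp
  ring

lemma integrable_id_expMeasure (hr : 0 < r) : Integrable (fun x => x) (expMeasure r) := by
  rw [integrable_expMeasure_iff hr, funext exponentialPDFReal_mul_eq_mul_max_sub_zero,
    ← integrable_expMeasure_iff hr]
  exact integrable_max_sub_expMeasure hr le_rfl

lemma integral_id_expMeasure (hr : 0 < r) : ∫ x, x ∂expMeasure r = r⁻¹ := by
  rw [integral_expMeasure hr, funext exponentialPDFReal_mul_eq_mul_max_sub_zero,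
    ← integral_expMeasure hr, integral_max_sub_expMeasure hr le_rfl]
  simp

lemma HasLaw.integrable_comp {Ω 𝓧 : Type*} [MeasurableSpace Ω] [MeasurableSpace 𝓧]
    {P : Measure Ω} {μ : Measure 𝓧} {X : Ω → 𝓧} (hX : HasLaw X μ P) {f : 𝓧 → ℝ}
    (hf : Integrable f μ) : Integrable (fun ω => f (X ω)) P :=
  (hX.map_eq ▸ hf).comp_aemeasurable hX.aemeasurable

end ProbabilityTheory

namespace SimpleGraph

variable {V : Type*} {G : SimpleGraph V}

lemma isIndepSet_coe_iff {s : Finset V} :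
    G.IsIndepSet (s : Set V) ↔ ∀ a ∈ s, ∀ b ∈ s, ¬G.Adj a b :=
  ⟨fun h _ ha _ hb hab => h ha hb (G.ne_of_adj hab) hab, fun h a ha b hb _ => h a ha b hb⟩

lemma IsMaximumIndepSet.card_le_card_mul_succ [Fintype V] [DecidableRel G.Adj] {s : Finset V}
    (hs : G.IsMaximumIndepSet s) {Δ : ℕ} (hdeg : ∀ v, G.degree v ≤ Δ) :
    Fintype.card V ≤ #s * (Δ + 1) := by
  classical
  -- a vertex outside `s` with no neighbour in `s` could be added to `s`
  have hcover : univ ⊆ s.biUnion fun u => insert u (G.neighborFinset u) := by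
    intro v _
    by_contra hv
    simp only [mem_biUnion, mem_insert, mem_neighborFinset, not_exists, not_and, not_or] at hv
    have hvs : v ∉ s := fun h => (hv v h).1 rfl
    have hindep : G.IsIndepSet (insert v s : Finset V) := by
      rw [coe_insert, IsIndepSet, Set.pairwise_insert]
      exact ⟨hs.isIndepSet, fun u hu _ => ⟨fun h => (hv u hu).2 h.symm, (hv u hu).2⟩⟩
    have hcard := hs.maximum _ hindep
    rw [card_insert_of_notMem hvs] at hcard
    omega
  calc Fintype.card V = #(univ : Finset V) := card_univ.symm
    _ ≤ #(s.biUnion fun u => insert u (G.neighborFinset u)) := card_le_card hcover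
    _ ≤ ∑ u ∈ s, #(insert u (G.neighborFinset u)) := card_biUnion_le
    _ ≤ ∑ _u ∈ s, (Δ + 1) := sum_le_sum fun u _ => (card_insert_le _ _).trans <| by
        rw [card_neighborFinset_eq_degree]
        exact Nat.succ_le_succ (hdeg u)
    _ = #s * (Δ + 1) := by rw [sum_const, smul_eq_mul]

end SimpleGraph

lemma Finset.sum_le_mul_add_sum_max_sub {ι : Type*} [Fintype ι] {s : Finset ι} {k : ℕ}
    (hs : #s ≤ k) {t : ℝ} (ht : 0 ≤ t) (w : ι → ℝ) :
    ∑ v ∈ s, w v ≤ k * t + ∑ v, max (w v - t) 0 :=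
  calc ∑ v ∈ s, w v ≤ ∑ v ∈ s, (t + max (w v - t) 0) :=
        sum_le_sum fun v _ => by linarith [le_max_left (w v - t) 0]
    _ = #s * t + ∑ v ∈ s, max (w v - t) 0 := by rw [sum_add_distrib, sum_const, nsmul_eq_mul]
    _ ≤ k * t + ∑ v, max (w v - t) 0 :=
        add_le_add (mul_le_mul_of_nonneg_right (by exact_mod_cast hs) ht)
          (sum_le_sum_of_subset_of_nonneg (subset_univ s) fun _ _ _ => le_max_right _ _)

lemma Real.log_add_one_add_one_le_ten_mul_log {x : ℝ} (hx : 2 ≤ x) :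
    Real.log (x + 1) + 1 ≤ 10 * Real.log x := by
  have hlog2 : Real.log 2 ≤ Real.log x := Real.log_le_log two_pos hx
  have hsq : Real.log (x + 1) ≤ 2 * Real.log x := by
    rw [← Real.log_rpow (by linarith)]
    exact Real.log_le_log (by linarith) (by norm_cast; nlinarith)
  linarith [Real.log_two_gt_d9]

namespace MeasureTheory

variable {Ω ι : Type*} [MeasurableSpace Ω] {P : Measure Ω}

lemma integrable_finset_sup' {s : Finset ι} (hs : s.Nonempty) {f : ι → Ω → ℝ}
    (hf : ∀ i ∈ s, Integrable (f i) P) : Integrable (s.sup' hs f) P :=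
  sup'_induction (p := (Integrable · P)) hs f (fun _ h₁ _ h₂ => h₁.sup h₂) hf

variable {W : ι → Ω → ℝ} {S : Finset (Finset ι)} {I : Ω → Finset ι}

lemma integrable_sum_of_forall_sum_le (hW : ∀ v, Integrable (W v) P) (hIS : ∀ ω, I ω ∈ S)
    (hImax : ∀ ω, ∀ J ∈ S, ∑ v ∈ J, W v ω ≤ ∑ v ∈ I ω, W v ω) (hS : S.Nonempty) :
    Integrable (fun ω => ∑ v ∈ I ω, W v ω) P := by
  have hsup : (fun ω => ∑ v ∈ I ω, W v ω) = S.sup' hS fun J ω => ∑ v ∈ J, W v ω := by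
    funext ω
    rw [Finset.sup'_apply]
    exact le_antisymm (le_sup' (fun J => ∑ v ∈ J, W v ω) (hIS ω)) (sup'_le _ _ (hImax ω))
  rw [hsup]
  exact integrable_finset_sup' hS fun J _ => integrable_finsetSum J fun v _ => hW v

lemma sum_integral_le_integral_sum_of_forall_sum_le (hW : ∀ v, Integrable (W v) P)
    (hIS : ∀ ω, I ω ∈ S) (hImax : ∀ ω, ∀ J ∈ S, ∑ v ∈ J, W v ω ≤ ∑ v ∈ I ω, W v ω)
    {J : Finset ι} (hJ : J ∈ S) :
    ∑ v ∈ J, ∫ ω, W v ω ∂P ≤ ∫ ω, ∑ v ∈ I ω, W v ω ∂P := by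
  rw [← integral_finsetSum J fun v _ => hW v]
  exact integral_mono (integrable_finsetSum J fun v _ => hW v)
    (integrable_sum_of_forall_sum_le hW hIS hImax ⟨J, hJ⟩) fun ω => hImax ω J hJ

lemma integral_sum_le_mul_add_sum_integral_max_sub [Fintype ι] [IsProbabilityMeasure P] {k : ℕ}
    (hI : ∀ ω, #(I ω) ≤ k) (hint : Integrable (fun ω => ∑ v ∈ I ω, W v ω) P)
    {t : ℝ} (ht : 0 ≤ t) (hW : ∀ v, Integrable (fun ω => max (W v ω - t) 0) P) :
    ∫ ω, ∑ v ∈ I ω, W v ω ∂P ≤ k * t + ∑ v, ∫ ω, max (W v ω - t) 0 ∂P := by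
  have hbound : Integrable (fun ω => k * t + ∑ v, max (W v ω - t) 0) P :=
    (integrable_const _).add (integrable_finsetSum _ fun v _ => hW v)
  calc ∫ ω, ∑ v ∈ I ω, W v ω ∂P ≤ ∫ ω, (k * t + ∑ v, max (W v ω - t) 0) ∂P :=
        integral_mono hint hbound fun ω => sum_le_mul_add_sum_max_sub (hI ω) ht (W · ω)
    _ = k * t + ∑ v, ∫ ω, max (W v ω - t) 0 ∂P := by
        rw [integral_add (integrable_const _) (integrable_finsetSum _ fun v _ => hW v),
          integral_const, integral_finsetSum _ fun v _ => hW v]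
        simp

lemma integral_sum_le_of_hasLaw_expMeasure [Fintype ι] [IsProbabilityMeasure P] {r : ℝ}
    (hr : 0 < r) (hW : ∀ v, HasLaw (W v) (expMeasure r) P) {k : ℕ} (hI : ∀ ω, #(I ω) ≤ k)
    (hint : Integrable (fun ω => ∑ v ∈ I ω, W v ω) P) {t : ℝ} (ht : 0 ≤ t) :
    ∫ ω, ∑ v ∈ I ω, W v ω ∂P ≤ k * t + Fintype.card ι * (Real.exp (-(r * t)) / r) := by
  have hmax : Measurable fun x : ℝ => max (x - t) 0 :=
    (measurable_id.sub_const t).max measurable_const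
  have hmean : ∀ v, ∫ ω, max (W v ω - t) 0 ∂P = Real.exp (-(r * t)) / r := fun v => by
    rw [← integral_max_sub_expMeasure hr ht]
    exact (hW v).integral_comp hmax.aestronglyMeasurable
  simpa [hmean] using integral_sum_le_mul_add_sum_integral_max_sub hI hint ht
    fun v => (hW v).integrable_comp (integrable_max_sub_expMeasure hr ht)

end MeasureTheory

/-- For `Δ ≥ 2` and all sufficiently large `n`, for every graph on `n` vertices
with maximum degree at most `Δ` and i.i.d. `Exp(1)` node weights,
`1 ≤ E[W(I*)]/|I^M| ≤ 10·log Δ`, where `I*` is the maximum weight independent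
set and `I^M` a maximum cardinality independent set. -/
theorem expected_MWIS_ratio (Δ : ℕ) (hΔ : 2 ≤ Δ) :
    ∃ N : ℕ, ∀ n ≥ N,
    ∀ (G : SimpleGraph (Fin n)) (_ : DecidableRel G.Adj),
      (∀ v, G.degree v ≤ Δ) →
    ∀ (Ω : Type) (_ : MeasurableSpace Ω) (P : Measure Ω),
      IsProbabilityMeasure P →
    ∀ (W : Fin n → Ω → ℝ), (∀ i, Measurable (W i)) →
      iIndepFun W P →
      (∀ i, P.map (W i) = expMeasure 1) →
    ∀ (IM : Finset (Fin n)), (∀ a ∈ IM, ∀ b ∈ IM, ¬ G.Adj a b) →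
      (∀ J : Finset (Fin n), (∀ a ∈ J, ∀ b ∈ J, ¬ G.Adj a b) → J.card ≤ IM.card) →
    ∀ (Istar : Ω → Finset (Fin n)),
      (∀ ω, ∀ a ∈ Istar ω, ∀ b ∈ Istar ω, ¬ G.Adj a b) →
      (∀ ω, ∀ J : Finset (Fin n), (∀ a ∈ J, ∀ b ∈ J, ¬ G.Adj a b) →
        ∑ v ∈ J, W v ω ≤ ∑ v ∈ Istar ω, W v ω) →
      1 ≤ (∫ ω, ∑ v ∈ Istar ω, W v ω ∂P) / IM.card ∧
      (∫ ω, ∑ v ∈ Istar ω, W v ω ∂P) / IM.card ≤ 10 * Real.log Δ := by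
  refine ⟨1, fun n hn G _ hdeg Ω _ P _ W hWm _ hlaw IM hIMind hIMmax I hIind hImax => ?_⟩
  have hW : ∀ v, HasLaw (W v) (expMeasure 1) P := fun v => ⟨(hWm v).aemeasurable, hlaw v⟩
  have hIM : G.IsMaximumIndepSet IM :=
    ⟨G.isIndepSet_coe_iff.2 hIMind, fun J hJ => hIMmax J (G.isIndepSet_coe_iff.1 hJ)⟩
  have hcover : n ≤ #IM * (Δ + 1) := by simpa using hIM.card_le_card_mul_succ hdeg
  have hk : (0 : ℝ) < #IM := by
    exact_mod_cast Nat.pos_of_ne_zero fun h => by rw [h, zero_mul] at hcover; omega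
  set S := univ.filter fun J : Finset (Fin n) => ∀ a ∈ J, ∀ b ∈ J, ¬G.Adj a b
  have hIS : ∀ ω, I ω ∈ S := by simpa [S] using hIind
  have hImaxS : ∀ ω, ∀ J ∈ S, ∑ v ∈ J, W v ω ≤ ∑ v ∈ I ω, W v ω := by simpa [S] using hImax
  have hIMS : IM ∈ S := by simpa [S] using hIMind
  have hWint : ∀ v, Integrable (W v) P :=
    fun v => (hW v).integrable_comp (integrable_id_expMeasure one_pos)
  have hlow : (#IM : ℝ) ≤ ∫ ω, ∑ v ∈ I ω, W v ω ∂P := by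
    simpa [(hW _).integral_eq, integral_id_expMeasure] using
      sum_integral_le_integral_sum_of_forall_sum_le hWint hIS hImaxS hIMS
  have hup := integral_sum_le_of_hasLaw_expMeasure one_pos hW (fun ω => hIMmax _ (hIind ω))
    (integrable_sum_of_forall_sum_le hWint hIS hImaxS ⟨IM, hIMS⟩)
    (Real.log_nonneg (le_add_of_nonneg_left (Nat.cast_nonneg (α := ℝ) Δ)))
  rw [Fintype.card_fin, one_mul, div_one, Real.exp_neg, Real.exp_log (by positivity)] at hup
  have hnk : n * ((Δ : ℝ) + 1)⁻¹ ≤ #IM := by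
    rw [← div_eq_mul_inv, div_le_iff₀ (by positivity)]
    exact_mod_cast hcover
  refine ⟨by rwa [le_div_iff₀ hk, one_mul], ?_⟩
  rw [div_le_iff₀ hk]
  calc ∫ ω, ∑ v ∈ I ω, W v ω ∂P ≤ #IM * (Real.log (Δ + 1) + 1) := by linarith
    _ ≤ #IM * (10 * Real.log Δ) := by
        gcongr
        exact Real.log_add_one_add_one_le_ten_mul_log (by exact_mod_cast hΔ)
    _ = 10 * Real.log Δ * #IM := mul_comm _ _
end

section
/- Define sequences by the recursions C⁻(i,0) = 0, C⁺(i,0) = W_i, and for r ≥ 1, C^±_H(i,r) = max(0, W_i − Σ_l C^±_{H∖{i,i_1,…,i_{l−1}}}(i_l, r−1)), and let C_H(i) satisfy the exact recursion C_H(i) = max(0, W_i − Σ_l C_{H∖{i,i_1,…,i_{l−1}}}(i_l)). Then for every even r, C⁻_H(i,r) ≤ C_H(i) ≤ C⁺_H(i,r), and for every odd r, C⁺_H(i,r) ≤ C_H(i) ≤ C⁻_H(i,r). -/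
variable {V : Type*} [DecidableEq V]

/-- `cavSum C H [i₁,…,i_d] = Σ_l C_{H∖{i₁,…,i_{l−1}}}(i_l)`:
the sum of cavities where the previously processed neighbors are removed. -/
def cavSum (C : Finset V → V → ℝ) : Finset V → List V → ℝ
  | _, [] => 0
  | H, a :: L => C H a + cavSum C (H.erase a) L

/-- The `r`-indexed version of `cavSum` for the approximate cavities. -/
def cavSumR (C : Finset V → V → ℕ → ℝ) (r : ℕ) : Finset V → List V → ℝ
  | _, [] => 0
  | H, a :: L => C H a r + cavSumR C r (H.erase a) L

/-!
The exact cavities `C` are a fixed point of the cavity map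
`F(C)_H(i) = max(0, W_i − Σ_l C_{H∖{i,i_1,…,i_{l−1}}}(i_l))`, and `C⁻(·, r)`, `C⁺(·, r)` are the
iterates of `F` started from `0` and from `W`, which bound `C` from below and above. Since
`x ↦ max(0, W − x)` is antitone, so is `F`, and applying an antitone map to a sandwich
`a ≤ C ≤ b` gives the reversed sandwich `F b ≤ C ≤ F a`; hence the bounds swap at each step.
-/

theorem Antitone.iterate_sandwich_fixedPoint {α : Type*} [Preorder α] {F : α → α}
    (hF : Antitone F) {c : α} (hc : F c = c) {a b : ℕ → α}
    (ha : ∀ r, a (r + 1) = F (a r)) (hb : ∀ r, b (r + 1) = F (b r))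
    (ha0 : a 0 ≤ c) (hb0 : c ≤ b 0) :
    ∀ r, (Even r → a r ≤ c ∧ c ≤ b r) ∧ (Odd r → b r ≤ c ∧ c ≤ a r) := by
  intro r
  induction r with
  | zero => exact ⟨fun _ => ⟨ha0, hb0⟩, fun h => absurd h Nat.not_odd_zero⟩
  | succ r ih =>
    rw [ha, hb]
    refine ⟨fun he => ?_, fun ho => ?_⟩
    · obtain ⟨hbc, hca⟩ := ih.2 (Nat.not_even_iff_odd.mp (Nat.even_add_one.mp he))
      exact ⟨hc ▸ hF hca, hc ▸ hF hbc⟩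
    · obtain ⟨hac, hcb⟩ := ih.1 (Nat.not_odd_iff_even.mp (Nat.odd_add_one.mp ho))
      exact ⟨hc ▸ hF hcb, hc ▸ hF hac⟩

theorem cavSumR_eq_cavSum (C : Finset V → V → ℕ → ℝ) (r : ℕ) (H : Finset V) (L : List V) :
    cavSumR C r H L = cavSum (fun H i => C H i r) H L := by
  induction L generalizing H with
  | nil => rfl
  | cons a L ih => simp only [cavSumR, cavSum, ih]

theorem cavSum_mono {C D : Finset V → V → ℝ} (h : C ≤ D) (H : Finset V) (L : List V) :
    cavSum C H L ≤ cavSum D H L := by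
  induction L generalizing H with
  | nil => exact le_rfl
  | cons a L ih => exact add_le_add (h H a) (ih _)

theorem cavSum_nonneg {C : Finset V → V → ℝ} (h : 0 ≤ C) (H : Finset V) (L : List V) :
    0 ≤ cavSum C H L := by
  induction L generalizing H with
  | nil => exact le_rfl
  | cons a L ih => exact add_nonneg (h H a) (ih _)

def cavityMap (W : V → ℝ) (nbrs : Finset V → V → List V) (C : Finset V → V → ℝ) :
    Finset V → V → ℝ :=
  fun H i => max 0 (W i - cavSum C (H.erase i) (nbrs H i))

theorem cavityMap_antitone (W : V → ℝ) (nbrs : Finset V → V → List V) :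
    Antitone (cavityMap W nbrs) := fun _ _ h _ _ =>
  max_le_max le_rfl (sub_le_sub_left (cavSum_mono h _ _) _)

theorem cavityMap_nonneg (W : V → ℝ) (nbrs : Finset V → V → List V) (C : Finset V → V → ℝ) :
    0 ≤ cavityMap W nbrs C := fun _ _ => le_max_left _ _

theorem cavityMap_le_weight {W : V → ℝ} (hW : ∀ i, 0 ≤ W i) (nbrs : Finset V → V → List V)
    {C : Finset V → V → ℝ} (hC : 0 ≤ C) (H : Finset V) (i : V) :
    cavityMap W nbrs C H i ≤ W i :=
  max_le (hW i) (sub_le_self _ (cavSum_nonneg hC _ _))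

/-- The bounded cavity recursions `C⁻, C⁺` with boundary conditions `0` and `W_i`
sandwich the exact cavity `C`: at even depths `C⁻ ≤ C ≤ C⁺`, at odd depths
`C⁺ ≤ C ≤ C⁻`. -/
theorem cavity_bounds (W : V → ℝ) (hW : ∀ i, 0 ≤ W i)
    (nbrs : Finset V → V → List V)
    (C : Finset V → V → ℝ) (Cm Cp : Finset V → V → ℕ → ℝ)
    (hC : ∀ H i, C H i = max 0 (W i - cavSum C (H.erase i) (nbrs H i)))
    (hCm0 : ∀ H i, Cm H i 0 = 0) (hCp0 : ∀ H i, Cp H i 0 = W i)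
    (hCm : ∀ H i r, Cm H i (r + 1) =
      max 0 (W i - cavSumR Cm r (H.erase i) (nbrs H i)))
    (hCp : ∀ H i r, Cp H i (r + 1) =
      max 0 (W i - cavSumR Cp r (H.erase i) (nbrs H i))) :
    ∀ (H : Finset V) (i : V) (r : ℕ),
      (Even r → Cm H i r ≤ C H i ∧ C H i ≤ Cp H i r) ∧
      (Odd r → Cp H i r ≤ C H i ∧ C H i ≤ Cm H i r) := by
  have hfix : cavityMap W nbrs C = C := funext₂ fun H i => (hC H i).symm
  have hC0 : 0 ≤ C := hfix ▸ cavityMap_nonneg W nbrs C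
  have hCW : ∀ H i, C H i ≤ W i := fun H i => hfix ▸ cavityMap_le_weight hW nbrs hC0 H i
  have key := (cavityMap_antitone W nbrs).iterate_sandwich_fixedPoint hfix
    (a := fun r H i => Cm H i r) (b := fun r H i => Cp H i r)
    (fun r => funext₂ fun H i => by rw [hCm, cavSumR_eq_cavSum]; rfl)
    (fun r => funext₂ fun H i => by rw [hCp, cavSumR_eq_cavSum]; rfl)
    (fun H i => (hCm0 H i).trans_le (hC0 H i)) (fun H i => (hCW H i).trans_eq (hCp0 H i).symm)
  intro H i r
  obtain ⟨hEven, hOdd⟩ := key r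
  exact ⟨fun he => ⟨(hEven he).1 H i, (hEven he).2 H i⟩,
    fun ho => ⟨(hOdd ho).1 H i, (hOdd ho).2 H i⟩⟩
end

section
/- Let G = (V, E, W) be a finite graph with nonnegative vertex weights, J_H the maximum weight of an independent set in an induced subgraph H, and C_G(i) = J_G − J_{G∖{i}}. For a node i with neighbors i_1,…,i_d, it holds that C_G(i) = max(0, W_i − Σ_{l=1}^{d} C_{G∖{i,i_1,…,i_{l−1}}}(i_l)). -/
/-!
Split the independent sets of `G[H]` according to whether they contain `i`: those that do
are `{i} ∪ S` with `S` independent in `H ∖ ({i} ∪ N(i))`, so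
`J_H = max (J_{H∖i}) (W_i + J_{H∖({i} ∪ N(i))})`. On the other hand the cavity sum telescopes,
`Σ_l C_{H∖{i₁,…,i_{l−1}}}(i_l) = J_H − J_{H∖{i₁,…,i_d}}`, and subtracting `J_{H∖i}` from the
first identity gives the recursion.
-/

variable {V : Type*} [DecidableEq V]

open Classical in
/-- `maxWeight G W H` is the maximum weight `J_H` of an independent set of the
induced subgraph of `G` on `H`. -/
noncomputable def maxWeight (G : SimpleGraph V) (W : V → ℝ) (H : Finset V) : ℝ :=
  (H.powerset.filter (fun S => ∀ a ∈ S, ∀ b ∈ S, ¬ G.Adj a b)).sup'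
    ⟨∅, by simp⟩ (fun S => ∑ v ∈ S, W v)

section maxWeight

variable (G : SimpleGraph V) (W : V → ℝ)

omit [DecidableEq V] in
lemma le_maxWeight {H S : Finset V} (hS : S ⊆ H) (hI : ∀ a ∈ S, ∀ b ∈ S, ¬ G.Adj a b) :
    ∑ v ∈ S, W v ≤ maxWeight G W H :=
  Finset.le_sup' (fun S => ∑ v ∈ S, W v) (by simpa using ⟨hS, hI⟩)

omit [DecidableEq V] in
lemma maxWeight_le {H : Finset V} {x : ℝ}
    (h : ∀ S ⊆ H, (∀ a ∈ S, ∀ b ∈ S, ¬ G.Adj a b) → ∑ v ∈ S, W v ≤ x) :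
    maxWeight G W H ≤ x :=
  Finset.sup'_le _ _ fun S hS => by
    simp only [Finset.mem_filter, Finset.mem_powerset] at hS
    exact h S hS.1 hS.2

omit [DecidableEq V] in
lemma maxWeight_mono {H H' : Finset V} (h : H ⊆ H') : maxWeight G W H ≤ maxWeight G W H' :=
  maxWeight_le G W fun _ hS hI => le_maxWeight G W (hS.trans h) hI

variable {G} {i : V} {H N : Finset V}

lemma add_maxWeight_sdiff_le (hi : i ∈ H) (hN : ∀ v ∈ H, G.Adj i v → v ∈ N) :
    W i + maxWeight G W (H.erase i \ N) ≤ maxWeight G W H := by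
  rw [← le_sub_iff_add_le']
  refine maxWeight_le G W fun S hS hI => le_sub_iff_add_le'.2 ?_
  have hiS : i ∉ S := fun h => by simpa using hS h
  have hSH : S ⊆ H := hS.trans (Finset.sdiff_subset.trans (Finset.erase_subset i H))
  have hSN : ∀ v ∈ S, ¬ G.Adj i v := fun v hv hiv =>
    (Finset.mem_sdiff.1 (hS hv)).2 (hN v (hSH hv) hiv)
  rw [← Finset.sum_insert hiS]
  refine le_maxWeight G W (Finset.insert_subset hi hSH) ?_
  simp only [Finset.mem_insert]
  rintro a (rfl | ha) b (rfl | hb)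
  · exact G.irrefl
  · exact hSN b hb
  · exact fun hab => hSN a ha hab.symm
  · exact hI a ha b hb

lemma maxWeight_le_max (hN : ∀ v ∈ H, v ∈ N → G.Adj i v) :
    maxWeight G W H ≤ max (maxWeight G W (H.erase i)) (W i + maxWeight G W (H.erase i \ N)) := by
  refine maxWeight_le G W fun S hS hI => ?_
  by_cases hiS : i ∈ S
  · refine le_max_of_le_right ?_
    rw [← Finset.add_sum_erase S W hiS]
    gcongr
    refine le_maxWeight G W (fun v hv => ?_) fun a ha b hb =>
      hI a (Finset.mem_of_mem_erase ha) b (Finset.mem_of_mem_erase hb)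
    obtain ⟨hvi, hvS⟩ := Finset.mem_erase.1 hv
    exact Finset.mem_sdiff.2 ⟨Finset.mem_erase.2 ⟨hvi, hS hvS⟩,
      fun hvN => hI i hiS v hvS (hN v (hS hvS) hvN)⟩
  · exact le_max_of_le_left <|
      le_maxWeight G W (fun v hv => Finset.mem_erase.2 ⟨ne_of_mem_of_not_mem hv hiS, hS hv⟩) hI

theorem maxWeight_eq_max (hi : i ∈ H) (hN : ∀ v ∈ H, v ∈ N ↔ G.Adj i v) :
    maxWeight G W H =
      max (maxWeight G W (H.erase i)) (W i + maxWeight G W (H.erase i \ N)) :=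
  le_antisymm (maxWeight_le_max W fun v hv => (hN v hv).1)
    (max_le (maxWeight_mono G W (H.erase_subset i))
      (add_maxWeight_sdiff_le W hi fun v hv => (hN v hv).2))

end maxWeight

lemma cavSum_sub_eq (f : Finset V → ℝ) (H : Finset V) (L : List V) :
    cavSum (fun H j => f H - f (H.erase j)) H L = f H - f (H \ L.toFinset) := by
  induction L generalizing H with
  | nil => simp [cavSum]
  | cons a L ih =>
    rw [cavSum, ih, List.toFinset_cons, Finset.sdiff_insert, ← Finset.erase_sdiff_comm]
    ring

theorem cavity_recursion_MWIS_general [Fintype V] (G : SimpleGraph V) (W : V → ℝ)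
    (i : V) (L : List V)
    (hL : ∀ v, v ∈ L ↔ G.Adj i v) :
    maxWeight G W Finset.univ - maxWeight G W (Finset.univ.erase i) =
      max 0 (W i - cavSum (fun H j => maxWeight G W H - maxWeight G W (H.erase j))
        (Finset.univ.erase i) L) := by
  rw [cavSum_sub_eq, maxWeight_eq_max W (Finset.mem_univ i) (N := L.toFinset)
    fun v _ => List.mem_toFinset.trans (hL v), ← max_sub_sub_right, sub_self]
  congr 1
  ring

/-- Exact cavity recursion for maximum weight independent sets:
`C_G(i) = max(0, W_i − Σ_l C_{G∖{i,i₁,…,i_{l−1}}}(i_l))` where `i₁,…,i_d` are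
the neighbors of `i`. -/
theorem cavity_recursion_MWIS [Fintype V] (G : SimpleGraph V) (W : V → ℝ)
    (hW : ∀ v, 0 ≤ W v) (i : V) (L : List V) (hnd : L.Nodup)
    (hL : ∀ v, v ∈ L ↔ G.Adj i v) :
    maxWeight G W Finset.univ - maxWeight G W (Finset.univ.erase i) =
      max 0 (W i - cavSum (fun H j => maxWeight G W H - maxWeight G W (H.erase j))
        (Finset.univ.erase i) L) :=
  cavity_recursion_MWIS_general G W i L hL
end

section
/- Let T ≥ 2, and for each pair x ≠ y in a finite action set χ of size T, suppose real random variables satisfy: P(|B(x)−B(y)| ≤ ε) ≤ 2gε and E|B(x)−B̂(x)| ≤ ρ for all x, for constants g, ρ > 0 and any ε > 0. Let x* = argmax_x B(x) and x̂ = argmax_x B̂(x) (assume the argmax of B is a.s. unique). Then P(x̂ ≠ x*) ≤ T²(gε + 2ρ/ε) for every ε > 0, and in particular P(x̂ ≠ x*) ≤ 2T²√(2gρ). -/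
open MeasureTheory ProbabilityTheory Finset

/-!
If `x̂ ≠ x*` then either some pair of true values `B x, B y` with `x ≠ y` is `ε`-close, or some
approximation error `|B z - B̂ z|` exceeds `ε / 2`: otherwise
`B x* - B x̂ ≤ B̂ x* - B̂ x̂ + ε ≤ ε`. A union bound over the `T(T-1)/2` unordered pairs and
Markov's inequality over the `T` actions give `T² g ε + T · 2ρ/ε`; the choice `ε = √(2ρ/g)`
balances the two terms.
-/

lemma two_mul_card_filter_lt_le_sq (ι : Type*) [Fintype ι] [LinearOrder ι] :
    2 * (#{p : ι × ι | p.1 < p.2} : ℝ) ≤ Fintype.card ι ^ 2 := by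
  rw [Fintype.card_product_filter_lt, Nat.cast_choose_two]
  nlinarith [(Fintype.card ι).cast_nonneg (α := ℝ)]

lemma exists_close_pair_or_far_approx {ι : Type*} [LinearOrder ι] {b bhat : ι → ℝ} {i j : ι}
    {ε : ℝ} (hi : ∀ y, y ≠ i → b y < b i) (hj : ∀ y, bhat y ≤ bhat j) (hji : j ≠ i) :
    (∃ p : ι × ι, p.1 < p.2 ∧ |b p.1 - b p.2| ≤ ε) ∨ ∃ z, ε / 2 < |b z - bhat z| := by
  by_contra! h
  obtain ⟨hfar, hclose⟩ := h
  have hij : |b i - b j| ≤ ε := by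
    have := hi j hji
    have := hj i
    have := abs_le.mp (hclose i)
    have := abs_le.mp (hclose j)
    rw [abs_le]
    constructor <;> linarith
  rcases lt_or_gt_of_ne hji with h | h
  · exact (hfar (j, i) h).not_ge (by rwa [abs_sub_comm])
  · exact (hfar (i, j) h).not_ge hij

section Measure

variable {Ω ι : Type*} [MeasurableSpace Ω] {μ : Measure Ω}

lemma measure_biUnion_le_card_mul_ofReal {I : Finset ι} {s : ι → Set Ω} {c : ℝ}
    (h : ∀ i ∈ I, μ (s i) ≤ ENNReal.ofReal c) :
    μ (⋃ i ∈ I, s i) ≤ ENNReal.ofReal (#I * c) := by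
  refine (measure_biUnion_finset_le I s).trans ((sum_le_card_nsmul _ _ _ h).trans_eq ?_)
  rw [nsmul_eq_mul, ENNReal.ofReal_mul (Nat.cast_nonneg _), ENNReal.ofReal_natCast]

lemma measure_lt_abs_le_ofReal_div {f : Ω → ℝ} (hf : Integrable f μ) {ρ c : ℝ} (hc : 0 < c)
    (hρ : ∫ ω, |f ω| ∂μ ≤ ρ) : μ {ω | c < |f ω|} ≤ ENNReal.ofReal (ρ / c) := by
  have hlint : ∫⁻ ω, ENNReal.ofReal |f ω| ∂μ ≤ ENNReal.ofReal ρ := by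
    rw [← ofReal_integral_eq_lintegral_ofReal hf.abs (.of_forall fun ω => abs_nonneg _)]
    exact ENNReal.ofReal_le_ofReal hρ
  calc μ {ω | c < |f ω|}
      ≤ μ {ω | ENNReal.ofReal c ≤ ENNReal.ofReal |f ω|} :=
        measure_mono fun ω hω => ENNReal.ofReal_le_ofReal (le_of_lt hω)
    _ ≤ (∫⁻ ω, ENNReal.ofReal |f ω| ∂μ) / ENNReal.ofReal c :=
        meas_ge_le_lintegral_div hf.aemeasurable.abs.ennreal_ofReal
          (ENNReal.ofReal_pos.2 hc).ne' ENNReal.ofReal_ne_top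
    _ ≤ ENNReal.ofReal ρ / ENNReal.ofReal c := by gcongr
    _ = ENNReal.ofReal (ρ / c) := (ENNReal.ofReal_div_of_pos hc).symm

theorem measure_argmax_ne_le [Fintype ι] [LinearOrder ι] (B Bhat : ι → Ω → ℝ)
    (hint : ∀ x, Integrable (fun ω => B x ω - Bhat x ω) μ) {g ρ ε : ℝ} (hg : 0 ≤ g)
    (hρ : 0 ≤ ρ) (hε : 0 < ε)
    (hpair : ∀ x y, x ≠ y → μ {ω | |B x ω - B y ω| ≤ ε} ≤ ENNReal.ofReal (2 * g * ε))
    (happrox : ∀ x, ∫ ω, |B x ω - Bhat x ω| ∂μ ≤ ρ) (xstar xhat : Ω → ι)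
    (hstar : ∀ᵐ ω ∂μ, ∀ y, y ≠ xstar ω → B y ω < B (xstar ω) ω)
    (hhat : ∀ ω, ∀ y, Bhat y ω ≤ Bhat (xhat ω) ω) :
    μ {ω | xhat ω ≠ xstar ω} ≤
      ENNReal.ofReal ((Fintype.card ι : ℝ) ^ 2 * (g * ε + 2 * ρ / ε)) := by
  set pairs : Finset (ι × ι) := {p | p.1 < p.2}
  set close := ⋃ p ∈ pairs, {ω | |B p.1 ω - B p.2 ω| ≤ ε}
  set far := ⋃ z ∈ (univ : Finset ι), {ω | ε / 2 < |B z ω - Bhat z ω|}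
  have hcover : {ω | xhat ω ≠ xstar ω} ≤ᵐ[μ] (close ∪ far : Set Ω) := by
    filter_upwards [hstar] with ω hω hne
    show ω ∈ close ∪ far
    simpa [close, far, pairs] using
      exists_close_pair_or_far_approx (ε := ε) hω (hhat ω) hne
  have hclose : μ close ≤ ENNReal.ofReal (#pairs * (2 * g * ε)) :=
    measure_biUnion_le_card_mul_ofReal fun p hp => hpair _ _ (mem_filter.1 hp).2.ne
  have hfar : μ far ≤ ENNReal.ofReal (Fintype.card ι * (2 * ρ / ε)) := by
    rw [← card_univ]
    refine measure_biUnion_le_card_mul_ofReal fun z _ => ?_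
    convert measure_lt_abs_le_ofReal_div (hint z) (half_pos hε) (happrox z) using 2
    field_simp
  have hcard := two_mul_card_filter_lt_le_sq ι
  have hT : (Fintype.card ι : ℝ) ≤ (Fintype.card ι : ℝ) ^ 2 := by
    exact_mod_cast Nat.le_self_pow two_ne_zero _
  calc μ {ω | xhat ω ≠ xstar ω}
      ≤ μ close + μ far := (measure_mono_ae hcover).trans (measure_union_le _ _)
    _ ≤ ENNReal.ofReal (#pairs * (2 * g * ε) + Fintype.card ι * (2 * ρ / ε)) := by
      rw [ENNReal.ofReal_add (by positivity) (by positivity)]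
      exact add_le_add hclose hfar
    _ ≤ ENNReal.ofReal ((Fintype.card ι : ℝ) ^ 2 * (g * ε + 2 * ρ / ε)) := by
      gcongr ENNReal.ofReal ?_
      nlinarith [mul_nonneg hg hε.le, div_nonneg (mul_nonneg zero_le_two hρ) hε.le]

end Measure

lemma mul_add_two_mul_div_eq_two_sqrt {g ρ : ℝ} (hg : 0 < g) (hρ : 0 < ρ) :
    g * (√(2 * g * ρ) / g) + 2 * ρ / (√(2 * g * ρ) / g) = 2 * √(2 * g * ρ) := by
  have hs : 0 < √(2 * g * ρ) := Real.sqrt_pos.2 (by positivity)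
  have hs2 : √(2 * g * ρ) ^ 2 = 2 * g * ρ := Real.sq_sqrt (by positivity)
  generalize √(2 * g * ρ) = s at hs hs2 ⊢
  field_simp
  linear_combination (-1 : ℝ) * hs2

theorem approx_argmax_error_general
    {Ω : Type*} [MeasurableSpace Ω] (P : Measure Ω)
    (T : ℕ) (B Bhat : Fin T → Ω → ℝ)
    (hint : ∀ x, Integrable (fun ω => B x ω - Bhat x ω) P)
    (g ρ : ℝ) (hg : 0 < g) (hρ : 0 < ρ)
    (hpair : ∀ x y : Fin T, x ≠ y → ∀ ε > (0:ℝ),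
      P {ω | |B x ω - B y ω| ≤ ε} ≤ ENNReal.ofReal (2 * g * ε))
    (happrox : ∀ x, ∫ ω, |B x ω - Bhat x ω| ∂P ≤ ρ)
    (xstar xhat : Ω → Fin T)
    (hstar : ∀ᵐ ω ∂P, ∀ y, y ≠ xstar ω → B y ω < B (xstar ω) ω)
    (hhat : ∀ ω, ∀ y, Bhat y ω ≤ Bhat (xhat ω) ω) :
    (∀ ε > (0:ℝ), P {ω | xhat ω ≠ xstar ω} ≤
      ENNReal.ofReal ((T : ℝ)^2 * (g * ε + 2 * ρ / ε))) ∧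
    P {ω | xhat ω ≠ xstar ω} ≤
      ENNReal.ofReal (2 * (T : ℝ)^2 * Real.sqrt (2 * g * ρ)) := by
  have hbound : ∀ ε > (0:ℝ), P {ω | xhat ω ≠ xstar ω} ≤
      ENNReal.ofReal ((T : ℝ)^2 * (g * ε + 2 * ρ / ε)) := fun ε hε => by
    simpa using measure_argmax_ne_le B Bhat hint hg.le hρ.le hε
      (fun x y hxy => hpair x y hxy ε hε) happrox xstar xhat hstar hhat
  refine ⟨hbound, ?_⟩
  have hopt := hbound (√(2 * g * ρ) / g) (by positivity)
  rwa [mul_add_two_mul_div_eq_two_sqrt hg hρ, ← mul_assoc, mul_comm _ (2 : ℝ)] at hopt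

/-- If the true cavities `B` have anticoncentrated pairwise differences
(`P(|B(x)−B(y)| ≤ ε) ≤ 2gε`) and the approximate cavities `B̂` satisfy
`E|B(x)−B̂(x)| ≤ ρ`, then the approximate argmax `x̂` differs from the (a.s.
unique) true argmax `x*` with probability at most `T²(gε + 2ρ/ε)` for every
`ε > 0`, and hence at most `2T²√(2gρ)`. -/
theorem approx_argmax_error
    {Ω : Type*} [MeasurableSpace Ω] (P : Measure Ω) [IsProbabilityMeasure P]
    (T : ℕ) (hT : 2 ≤ T) (B Bhat : Fin T → Ω → ℝ)
    (hBmeas : ∀ x, Measurable (B x)) (hBhatmeas : ∀ x, Measurable (Bhat x))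
    (hint : ∀ x, Integrable (fun ω => B x ω - Bhat x ω) P)
    (g ρ : ℝ) (hg : 0 < g) (hρ : 0 < ρ)
    (hpair : ∀ x y : Fin T, x ≠ y → ∀ ε > (0:ℝ),
      P {ω | |B x ω - B y ω| ≤ ε} ≤ ENNReal.ofReal (2 * g * ε))
    (happrox : ∀ x, ∫ ω, |B x ω - Bhat x ω| ∂P ≤ ρ)
    (xstar xhat : Ω → Fin T)
    (hstar : ∀ᵐ ω ∂P, ∀ y, y ≠ xstar ω → B y ω < B (xstar ω) ω)
    (hhat : ∀ ω, ∀ y, Bhat y ω ≤ Bhat (xhat ω) ω) :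
    (∀ ε > (0:ℝ), P {ω | xhat ω ≠ xstar ω} ≤
      ENNReal.ofReal ((T : ℝ)^2 * (g * ε + 2 * ρ / ε))) ∧
    P {ω | xhat ω ≠ xstar ω} ≤
      ENNReal.ofReal (2 * (T : ℝ)^2 * Real.sqrt (2 * g * ρ)) :=
  approx_argmax_error_general P T B Bhat hint g ρ hg hρ hpair happrox xstar xhat hstar hhat
end
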